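/- If a feasible allocation x has, for some server i, no fully booked resource (i.e., \sum_n x_{n,i} B_{n,i,r} < 1 for all r) and some framework m with \delta_{m,i}=1, then x is not optimal for \sum_n \phi_n g(U_n): there exists \epsilon > 0 such that increasing x_{m,i} by \epsilon remains feasible and strictly increases the objective. -/
import Mathlib


open Finset

/-- If a server has no fully booked resource and some framework prefers it, then
the allocation is not optimal: a small increase of that framework's allocation on
that server stays feasible and strictly increases the objective. -/
theorem stmt_17 {N S R : Type*} [Fintype N] [Fintype S] [Fintype R]
    [DecidableEq N] [DecidableEq S]
    (B : N → S → R → ℝ) (hB : ∀ n i r, 0 < B n i r)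
    (u : N → S → ℝ) (hu : ∀ n i, 0 < u n i)
    (φ : N → ℝ) (hφ : ∀ n, 0 < φ n)
    (δ : N → S → Prop)
    (g : ℝ → ℝ) (hg : StrictMono g)
    (x : N → S → ℝ)
    (hx0 : ∀ n i, 0 ≤ x n i)
    (hsupp : ∀ n i, 0 < x n i → δ n i)
    (hcap : ∀ i r, ∑ n, x n i * B n i r ≤ 1)
    (i : S) (hunsat : ∀ r, ∑ n, x n i * B n i r < 1)
    (m : N) (hδ : δ m i) :
    ∃ ε > 0,
      let x' : N → S → ℝ := fun n' i' =>
        x n' i' + if n' = m ∧ i' = i then ε else 0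
      (∀ n' i', 0 ≤ x' n' i') ∧
      (∀ n' i', 0 < x' n' i' → δ n' i') ∧
      (∀ i' r, ∑ n, x' n i' * B n i' r ≤ 1) ∧
      ∑ n, φ n * g ((1 / φ n) * ∑ j, u n j * x n j) <
        ∑ n, φ n * g ((1 / φ n) * ∑ j, u n j * x' n j) := by
  have key : ∃ ε : ℝ, 0 < ε ∧ ∀ r, ε * B m i r ≤ 1 - ∑ n, x n i * B n i r := by
    by_cases hR : Nonempty R
    · have hne : (univ : Finset R).Nonempty := univ_nonempty
      set f : R → ℝ := fun r => (1 - ∑ n, x n i * B n i r) / B m i r with hf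
      refine ⟨(univ : Finset R).inf' hne f, ?_, ?_⟩
      · rw [Finset.lt_inf'_iff]
        intro r _
        exact div_pos (by linarith [hunsat r]) (hB m i r)
      · intro r
        have h1 : (univ : Finset R).inf' hne f ≤ f r := inf'_le _ (mem_univ r)
        have h2 : f r * B m i r = 1 - ∑ n, x n i * B n i r :=
          div_mul_cancel₀ _ (hB m i r).ne'
        nlinarith [hB m i r]
    · exact ⟨1, one_pos, fun r => absurd ⟨r⟩ hR⟩
  obtain ⟨ε, hε, hεcap⟩ := key
  refine ⟨ε, hε, ?_, ?_, ?_, ?_⟩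
  · intro n' i'
    dsimp only
    split_ifs <;> [linarith [hx0 n' i', hε.le]; simpa using hx0 n' i']
  · intro n' i' h
    dsimp only at h
    by_cases hc : n' = m ∧ i' = i
    · obtain ⟨rfl, rfl⟩ := hc; exact hδ
    · rw [if_neg hc, add_zero] at h; exact hsupp _ _ h
  · intro i' r
    by_cases hi : i' = i
    · subst hi
      have hsum : ∑ n, (x n i' + if n = m ∧ i' = i' then ε else 0) * B n i' r
          = (∑ n, x n i' * B n i' r) + ε * B m i' r := by
        have h3 : ∀ n ∈ (univ : Finset N),
            (x n i' + if n = m ∧ i' = i' then ε else 0) * B n i' r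
            = x n i' * B n i' r + (if n = m then ε * B m i' r else 0) := by
          intro n _
          simp only [and_true]
          split_ifs with h
          · subst h; ring
          · ring
        rw [Finset.sum_congr rfl h3, Finset.sum_add_distrib]
        simp
      dsimp only
      rw [hsum]
      linarith [hεcap r]
    · have hF : ∀ n, (n = m ∧ i' = i) = False := by
        intro n; simp [hi]
      dsimp only
      simp only [hF, if_false, add_zero]
      exact hcap i' r
  · dsimp only
    apply Finset.sum_lt_sum
    · intro n _
      by_cases hn : n = m
      · subst hn
        have harg : (1 / φ n) * ∑ j, u n j * x n j
            ≤ (1 / φ n) * ∑ j, u n j * (x n j + if n = n ∧ j = i then ε else 0) := by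
          apply mul_le_mul_of_nonneg_left _ (one_div_pos.mpr (hφ n)).le
          apply Finset.sum_le_sum
          intro j _
          have h4 : (0:ℝ) ≤ if n = n ∧ j = i then ε else 0 := by
            split_ifs <;> [exact hε.le; rfl]
          nlinarith [hu n j]
        exact mul_le_mul_of_nonneg_left (hg.monotone harg) (hφ n).le
      · have hF : ∀ j, (n = m ∧ j = i) = False := by intro j; simp [hn]
        simp only [hF, if_false, add_zero]
        exact le_refl _
    · refine ⟨m, mem_univ m, ?_⟩
      have hsum : ∑ j, u m j * (x m j + if m = m ∧ j = i then ε else 0)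
          = (∑ j, u m j * x m j) + u m i * ε := by
        have h5 : ∀ j ∈ (univ : Finset S),
            u m j * (x m j + if m = m ∧ j = i then ε else 0)
            = u m j * x m j + (if j = i then u m i * ε else 0) := by
          intro j _
          simp only [true_and]
          split_ifs with h
          · subst h; ring
          · ring
        rw [Finset.sum_congr rfl h5, Finset.sum_add_distrib]
        simp
      have harg : (1 / φ m) * ∑ j, u m j * x m j
          < (1 / φ m) * ∑ j, u m j * (x m j + if m = m ∧ j = i then ε else 0) := by
        rw [hsum]
        apply mul_lt_mul_of_pos_left _ (one_div_pos.mpr (hφ m))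
        nlinarith [hu m i]
      exact mul_lt_mul_of_pos_left (hg harg) (hφ m)
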